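/- arXiv:2406.17242 — 2 statements merged into one kernel-verified Lean document; each statement's English description precedes it below -/
import Mathlib

section
/- The Laplace transform of Ψ(t) = dexp(-μt; -μτ) is 1/(s + μ e^{-sτ}) for all real s sufficiently large (s > 0 with s > μ e^{-sτ} suffices), where the transform is ∫_0^∞ e^{-st} Ψ(t) dt. -/
open Real Set

noncomputable def dexp (μ τ t : ℝ) : ℝ :=
  ∑' n : ℕ, (-μ) ^ n * (t - n * τ) ^ n / (Nat.factorial n) * (if (n : ℝ) * τ ≤ t then 1 else 0)

/-!
The `n`-th term of `dexp μ τ` is `(-μ)ⁿ / n!` times the power `tⁿ` delayed to start at `nτ ≥ 0`,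
whose Laplace transform is `e^{-snτ} n! / s^{n+1}`. Hence the transform of `dexp μ τ` is the
geometric series `(1/s) ∑ (-μ e^{-sτ} / s)ⁿ = 1 / (s + μ e^{-sτ})`. The same computation with `μ`
in place of `-μ` bounds the absolute values of the terms, so for `μ e^{-sτ} < s` the series of
integrals of absolute values converges and sum and integral may be exchanged.
-/

open MeasureTheory
open scoped Nat

noncomputable def laplaceTransform (f : ℝ → ℝ) (s : ℝ) : ℝ :=
  ∫ t in Ioi 0, Real.exp (-s * t) * f t

section IoiIntegrals

variable {E : Type*} [NormedAddCommGroup E]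

theorem integrableOn_Ioi_comp_add_right_iff (f : ℝ → E) (a b : ℝ) :
    IntegrableOn (fun x => f (x + a)) (Ioi b) ↔ IntegrableOn f (Ioi (b + a)) := by
  have hpre : (· + a) ⁻¹' Ioi (b + a) = Ioi b := by ext x; simp
  rw [← hpre]
  exact (measurePreserving_add_right volume a).integrableOn_comp_preimage
    (measurableEmbedding_addRight a)

theorem setIntegral_Ioi_comp_add_right [NormedSpace ℝ E] (f : ℝ → E) (a b : ℝ) :
    ∫ x in Ioi b, f (x + a) = ∫ x in Ioi (b + a), f x := by
  have hpre : (· + a) ⁻¹' Ioi (b + a) = Ioi b := by ext x; simp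
  rw [← hpre, (measurePreserving_add_right volume a).setIntegral_preimage_emb
    (measurableEmbedding_addRight a)]

theorem integrableOn_Ioi_indicator_Ici {g : ℝ → E} {a : ℝ} (hg : IntegrableOn g (Ioi a))
    (b : ℝ) : IntegrableOn ((Ici a).indicator g) (Ioi b) :=
  (integrable_indicator_iff measurableSet_Ici).2
    (integrableOn_Ici_iff_integrableOn_Ioi (f := g) |>.2 hg).restrict

theorem setIntegral_Ioi_indicator_Ici [NormedSpace ℝ E] (g : ℝ → E) {a b : ℝ} (hab : b ≤ a) :
    ∫ t in Ioi b, (Ici a).indicator g t = ∫ t in Ioi a, g t := by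
  rw [← integral_Ici_eq_integral_Ioi, setIntegral_indicator measurableSet_Ici, Ici_inter_Ici,
    max_eq_right hab, integral_Ici_eq_integral_Ioi]

end IoiIntegrals

theorem integrableOn_exp_neg_mul_mul_pow {s : ℝ} (hs : 0 < s) (n : ℕ) :
    IntegrableOn (fun t => Real.exp (-s * t) * t ^ n) (Ioi 0) := by
  refine (integrableOn_rpow_mul_exp_neg_mul_rpow (p := 1) (s := n) (b := s)
    (by linarith [n.cast_nonneg (α := ℝ)]) one_pos hs).congr_fun (fun t _ => ?_) measurableSet_Ioi
  simp [mul_comm]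

theorem laplaceTransform_pow {s : ℝ} (hs : 0 < s) (n : ℕ) :
    laplaceTransform (fun t => t ^ n) s = n ! / s ^ (n + 1) := by
  have h := integral_rpow_mul_exp_neg_mul_Ioi (a := n + 1) (by positivity) hs
  simp only [add_sub_cancel_right, rpow_natCast, Gamma_nat_eq_factorial] at h
  rw [laplaceTransform]
  convert h using 1
  · refine setIntegral_congr_fun measurableSet_Ioi fun t _ => ?_
    simp [mul_comm]
  · rw [← Nat.cast_add_one, rpow_natCast, one_div, inv_pow]
    field_simp

theorem laplaceTransform_const_mul (f : ℝ → ℝ) (c s : ℝ) :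
    laplaceTransform (fun t => c * f t) s = c * laplaceTransform f s := by
  simp only [laplaceTransform, mul_left_comm _ c, integral_const_mul]

theorem exp_neg_mul_mul_indicator_Ici (f : ℝ → ℝ) (s a : ℝ) :
    (fun t => Real.exp (-s * t) * (Ici a).indicator (fun t => f (t - a)) t)
      = (Ici a).indicator fun t => Real.exp (-s * t) * f (t - a) := by
  ext t
  rw [indicator_mul_right]

theorem exp_neg_mul_mul_comp_add_sub (f : ℝ → ℝ) (s a x : ℝ) :
    Real.exp (-s * (x + a)) * f (x + a - a) = Real.exp (-s * a) * (Real.exp (-s * x) * f x) := by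
  rw [add_sub_cancel_right, mul_add, Real.exp_add]
  ring

theorem integrableOn_indicator_Ici_shift {f : ℝ → ℝ} {s a : ℝ}
    (hf : IntegrableOn (fun t => Real.exp (-s * t) * f t) (Ioi 0)) :
    IntegrableOn (fun t => Real.exp (-s * t) * (Ici a).indicator (fun t => f (t - a)) t)
      (Ioi 0) := by
  rw [exp_neg_mul_mul_indicator_Ici]
  refine integrableOn_Ioi_indicator_Ici ?_ 0
  have hshift : IntegrableOn (fun x => Real.exp (-s * (x + a)) * f (x + a - a)) (Ioi 0) := by
    simp_rw [exp_neg_mul_mul_comp_add_sub]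
    exact hf.const_mul _
  simpa only [zero_add] using (integrableOn_Ioi_comp_add_right_iff _ a 0).1 hshift

theorem laplaceTransform_indicator_Ici_shift (f : ℝ → ℝ) {a : ℝ} (ha : 0 ≤ a) (s : ℝ) :
    laplaceTransform ((Ici a).indicator fun t => f (t - a)) s
      = Real.exp (-s * a) * laplaceTransform f s := by
  rw [laplaceTransform, laplaceTransform, exp_neg_mul_mul_indicator_Ici,
    setIntegral_Ioi_indicator_Ici _ ha]
  simpa only [zero_add, exp_neg_mul_mul_comp_add_sub, integral_const_mul]
    using (setIntegral_Ioi_comp_add_right (fun t => Real.exp (-s * t) * f (t - a)) a 0).symm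

theorem laplaceTransform_tsum {f : ℕ → ℝ → ℝ} {s : ℝ}
    (hf : ∀ n, IntegrableOn (fun t => Real.exp (-s * t) * f n t) (Ioi 0))
    (hsum : Summable fun n => laplaceTransform (fun t => |f n t|) s) :
    HasSum (fun n => laplaceTransform (f n) s) (laplaceTransform (fun t => ∑' n, f n t) s) := by
  simp_rw [laplaceTransform, ← tsum_mul_left]
  refine hasSum_integral_of_summable_integral_norm hf ?_
  simpa only [norm_mul, Real.norm_of_nonneg (Real.exp_pos _).le, Real.norm_eq_abs,
    laplaceTransform] using hsum

noncomputable def dexpTerm (c τ : ℝ) (n : ℕ) (t : ℝ) : ℝ :=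
  c ^ n / n ! * (Ici (n * τ)).indicator (fun t => (t - n * τ) ^ n) t

theorem dexp_eq_tsum_dexpTerm (μ τ t : ℝ) : dexp μ τ t = ∑' n, dexpTerm (-μ) τ n t := by
  refine tsum_congr fun n => ?_
  by_cases h : (n : ℝ) * τ ≤ t <;> simp [dexpTerm, h, div_mul_eq_mul_div]

theorem abs_dexpTerm (c τ : ℝ) (n : ℕ) (t : ℝ) : |dexpTerm c τ n t| = dexpTerm |c| τ n t := by
  by_cases h : (n : ℝ) * τ ≤ t
  · simp [dexpTerm, h, abs_mul, abs_div, abs_pow, abs_of_nonneg (sub_nonneg.2 h)]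
  · simp [dexpTerm, h]

theorem integrableOn_exp_neg_mul_mul_dexpTerm {s : ℝ} (hs : 0 < s) (c τ : ℝ) (n : ℕ) :
    IntegrableOn (fun t => Real.exp (-s * t) * dexpTerm c τ n t) (Ioi 0) := by
  simp only [dexpTerm, mul_left_comm (Real.exp _)]
  exact (integrableOn_indicator_Ici_shift (integrableOn_exp_neg_mul_mul_pow hs n)).const_mul _

theorem laplaceTransform_dexpTerm {τ s : ℝ} (hτ : 0 ≤ τ) (hs : 0 < s) (c : ℝ) (n : ℕ) :
    laplaceTransform (dexpTerm c τ n) s = (c * Real.exp (-s * τ) / s) ^ n / s := by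
  have hshift := laplaceTransform_indicator_Ici_shift (· ^ n) (by positivity : 0 ≤ n * τ) s
  unfold dexpTerm
  rw [laplaceTransform_const_mul, hshift, laplaceTransform_pow hs,
    show -s * (n * τ) = n * (-s * τ) by ring, Real.exp_nat_mul,
    div_pow, mul_pow, pow_succ]
  field_simp

theorem dexp_laplace_transform_general (μ τ : ℝ) (hμ : 0 < μ) (hτ : 0 ≤ τ)
    (s : ℝ) (hs : 0 < s)
    (hs' : μ * Real.exp (-s * τ) < s) :
    ∫ t in Ioi (0 : ℝ), Real.exp (-s * t) * dexp μ τ t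
      = 1 / (s + μ * Real.exp (-s * τ)) := by
  set r := -μ * Real.exp (-s * τ) / s with hr_def
  have hr : |r| < 1 := by
    rw [abs_div, abs_mul, abs_neg, abs_of_pos hμ, abs_of_pos (Real.exp_pos _), abs_of_pos hs]
    exact (div_lt_one hs).2 hs'
  have hsummable : Summable fun n => laplaceTransform (fun t => |dexpTerm (-μ) τ n t|) s := by
    have hr' : |-μ| * Real.exp (-s * τ) / s = |r| := by
      rw [abs_div, abs_mul, abs_of_pos (Real.exp_pos _), abs_of_pos hs]
    simp_rw [abs_dexpTerm, laplaceTransform_dexpTerm hτ hs, hr']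
    exact (summable_geometric_of_lt_one (abs_nonneg r) hr).div_const s
  have hsum := laplaceTransform_tsum (integrableOn_exp_neg_mul_mul_dexpTerm hs (-μ) τ) hsummable
  simp_rw [laplaceTransform_dexpTerm hτ hs, ← dexp_eq_tsum_dexpTerm] at hsum
  change laplaceTransform (dexp μ τ) s = _
  rw [← hsum.tsum_eq, tsum_div_const, tsum_geometric_of_abs_lt_one hr]
  have hden : s + μ * Real.exp (-s * τ) = s * (1 - r) := by
    rw [hr_def]
    field_simp
    ring
  rw [hden, one_div, mul_inv, div_eq_mul_inv, mul_comm]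

/-- The Laplace transform of `Ψ(t) = dexp(-μt; -μτ)` is `1/(s + μ e^{-sτ})` for real
`s > 0` with `μ e^{-sτ} < s`, assuming `0 ≤ μτ ≤ e⁻¹`. -/
theorem dexp_laplace_transform (μ τ : ℝ) (hμ : 0 < μ) (hτ : 0 ≤ τ)
    (hμτ : μ * τ ≤ (Real.exp 1)⁻¹) (s : ℝ) (hs : 0 < s)
    (hs' : μ * Real.exp (-s * τ) < s) :
    ∫ t in Ioi (0 : ℝ), Real.exp (-s * t) * dexp μ τ t
      = 1 / (s + μ * Real.exp (-s * τ)) :=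
  dexp_laplace_transform_general μ τ hμ hτ s hs hs'
end

section
/- If 0 < μτ < 1/e, then Ψ(t) = dexp(-μt; -μτ) for t ≥ 0 (and Ψ(t) = 1 for t < 0) is a valid survival function: it is non-increasing, right continuous, Ψ(0) = 1, and Ψ(t) → 0 as t → ∞. Consequently ψ(t) = μ dexp(-μ(t-τ); -μτ) defines a probability density on [0, ∞) with ∫_0^∞ ψ(t) dt = 1. -/
open Real Set Filter MeasureTheory

/-- The survival function `Ψ(t) = dexp(-μt; -μτ)` for `t ≥ 0` (and `Ψ(t) = 1` for `t < 0`). -/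
noncomputable def Ψdexp (μ τ t : ℝ) : ℝ := if t < 0 then 1 else dexp μ τ t

/-!
On `t < N τ` the series defining `dexp` is a finite sum of truncated powers
`(-μ)ⁿ (t - nτ)₊ⁿ / n!`, so `dexp` is continuous on `[0, ∞)` and has right derivative
`-μ dexp (t - τ)` at every point.

The heart of the matter is positivity: `z t = e^{t/τ} dexp t` is monotone. If it is monotone on
`(-∞, a]` and `t ∈ [a, a + τ]`, the delayed term of `z' = z / τ - μ e z (· - τ)` is bounded on
`[a, t]` by `M = z (t - τ) ≤ z a`, and `μ e τ ≤ 1` makes `u ↦ e^{-u/τ} (z u - M)` nondecreasing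
there; it starts nonnegative, so `z ≥ M` on `[a, t]` and then `z s ≤ z t` for `a ≤ s ≤ t`.

Once `dexp ≥ 0`, it is antitone on `[0, ∞)`, which gives `dexp T · (1 + μ (T - τ)) ≤ 1` and
hence `dexp → 0`. The density `μ dexp (t - τ)` is the right derivative of `-dexp`, so its
integral over `(0, ∞)` is `dexp 0 - 0 = 1`.
-/

open Topology

theorem monotoneOn_Icc_of_hasDerivWithinAt_Ici_nonneg {f f' : ℝ → ℝ} {a b : ℝ}
    (hf : ContinuousOn f (Icc a b))
    (hf' : ∀ x ∈ Ico a b, HasDerivWithinAt f (f' x) (Ici x) x)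
    (hf'₀ : ∀ x ∈ Ico a b, 0 ≤ f' x) : MonotoneOn f (Icc a b) := by
  intro s hs t ht hst
  have hsub : Icc s b ⊆ Icc a b := Icc_subset_Icc_left hs.1
  have hsub' : Ico s b ⊆ Ico a b := Ico_subset_Ico_left hs.1
  exact image_le_of_deriv_right_le_deriv_boundary continuousOn_const
    (fun _ _ => hasDerivWithinAt_const _ _ _) le_rfl (hf.mono hsub)
    (fun x hx => hf' x (hsub' hx)) (fun x hx => hf'₀ x (hsub' hx)) ⟨hst, ht.2⟩

theorem antitoneOn_Icc_of_hasDerivWithinAt_Ici_nonpos {f f' : ℝ → ℝ} {a b : ℝ}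
    (hf : ContinuousOn f (Icc a b))
    (hf' : ∀ x ∈ Ico a b, HasDerivWithinAt f (f' x) (Ici x) x)
    (hf'₀ : ∀ x ∈ Ico a b, f' x ≤ 0) : AntitoneOn f (Icc a b) := fun _ hs _ ht hst =>
  neg_le_neg_iff.1 <| monotoneOn_Icc_of_hasDerivWithinAt_Ici_nonneg hf.neg
    (fun x hx => (hf' x hx).neg) (fun x hx => neg_nonneg.2 (hf'₀ x hx)) hs ht hst

theorem integral_Ioi_of_hasDerivWithinAt_Ioi_of_nonneg {g g' : ℝ → ℝ} {a l : ℝ}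
    (hcont : ContinuousOn g (Ici a))
    (hderiv : ∀ x ∈ Ioi a, HasDerivWithinAt g (g' x) (Ioi x) x)
    (hg'₀ : ∀ x ∈ Ioi a, 0 ≤ g' x) (hg : Tendsto g atTop (𝓝 l)) :
    ∫ x in Ioi a, g' x = l - g a := by
  have hint : ∀ b, IntegrableOn g' (Ioc a b) := fun b =>
    intervalIntegral.integrableOn_deriv_right_of_nonneg (hcont.mono Icc_subset_Ici_self)
      (fun x hx => hderiv x hx.1) (fun x hx => hg'₀ x hx.1)
  have hlim : Tendsto (fun b => ∫ x in a..b, g' x) atTop (𝓝 (l - g a)) := by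
    refine (hg.sub_const _).congr' <| (eventually_ge_atTop a).mono fun b hab => ?_
    exact (intervalIntegral.integral_eq_sub_of_hasDeriv_right_of_le hab
      (hcont.mono Icc_subset_Ici_self) (fun x hx => hderiv x hx.1)
      ((intervalIntegrable_iff_integrableOn_Ioc_of_le hab).2 (hint b))).symm
  have hnorm : ∀ᶠ b in atTop, ∫ x in a..b, g' x = ∫ x in a..b, ‖g' x‖ :=
    (eventually_ge_atTop a).mono fun b hab => intervalIntegral.integral_congr_ae <|
      ae_of_all _ fun x hx => (Real.norm_of_nonneg (hg'₀ x (by simpa [hab] using hx.1))).symm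
  have hIoi : IntegrableOn g' (Ioi a) :=
    integrableOn_Ioi_of_intervalIntegral_norm_tendsto _ a hint tendsto_id (hlim.congr' hnorm)
  exact tendsto_nhds_unique (intervalIntegral_tendsto_integral_Ioi a hIoi tendsto_id) hlim

noncomputable def truncPow (n : ℕ) (x : ℝ) : ℝ := if 0 ≤ x then x ^ n / n.factorial else 0

theorem truncPow_of_neg {n : ℕ} {x : ℝ} (hx : x < 0) : truncPow n x = 0 :=
  if_neg hx.not_ge

theorem truncPow_zero_of_nonneg {x : ℝ} (hx : 0 ≤ x) : truncPow 0 x = 1 := by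
  simp [truncPow, hx]

theorem truncPow_succ_of_nonpos {n : ℕ} {x : ℝ} (hx : x ≤ 0) : truncPow (n + 1) x = 0 := by
  rcases hx.lt_or_eq with hx | rfl
  · exact truncPow_of_neg hx
  · simp [truncPow]

theorem continuous_truncPow_succ (n : ℕ) : Continuous (truncPow (n + 1)) :=
  Continuous.if_le (by fun_prop) continuous_const continuous_const continuous_id
    fun x hx => by simp [← hx]

theorem hasDerivWithinAt_truncPow_zero (x : ℝ) : HasDerivWithinAt (truncPow 0) 0 (Ici x) x := by
  rcases lt_or_ge x 0 with hx | hx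
  · refine (hasDerivAt_const x (0 : ℝ)).hasDerivWithinAt.congr_of_eventuallyEq ?_
      (truncPow_of_neg hx)
    filter_upwards [nhdsWithin_le_nhds (Iio_mem_nhds hx)] with y hy using truncPow_of_neg hy
  · exact (hasDerivWithinAt_const x _ (1 : ℝ)).congr
      (fun y hy => truncPow_zero_of_nonneg (hx.trans hy)) (truncPow_zero_of_nonneg hx)

theorem hasDerivWithinAt_truncPow_succ (n : ℕ) (x : ℝ) :
    HasDerivWithinAt (truncPow (n + 1)) (truncPow n x) (Ici x) x := by
  rcases lt_or_ge x 0 with hx | hx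
  · rw [truncPow_of_neg hx]
    refine (hasDerivAt_const x (0 : ℝ)).hasDerivWithinAt.congr_of_eventuallyEq ?_
      (truncPow_of_neg hx)
    filter_upwards [nhdsWithin_le_nhds (Iio_mem_nhds hx)] with y hy using truncPow_of_neg hy
  · have hpoly : HasDerivAt (fun y : ℝ => y ^ (n + 1) / (n + 1).factorial)
        (x ^ n / n.factorial) x := by
      refine ((hasDerivAt_pow (n + 1) x).div_const _).congr_deriv ?_
      rw [Nat.factorial_succ]; push_cast; field_simp
    rw [truncPow, if_pos hx]
    exact hpoly.hasDerivWithinAt.congr (fun y hy => if_pos (hx.trans hy)) (if_pos hx)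

section Dexp

variable {μ τ : ℝ}

theorem dexp_eq_sum (hτ : 0 ≤ τ) {t : ℝ} {N : ℕ} (ht : t < N * τ) :
    dexp μ τ t = ∑ n ∈ Finset.range N, (-μ) ^ n * truncPow n (t - n * τ) := by
  have hterm : ∀ n : ℕ, (-μ) ^ n * (t - n * τ) ^ n / n.factorial *
      (if (n : ℝ) * τ ≤ t then 1 else 0) = (-μ) ^ n * truncPow n (t - n * τ) := by
    intro n
    simp only [truncPow, sub_nonneg]
    split_ifs <;> ring
  simp only [dexp, hterm]
  refine tsum_eq_sum fun n hn => ?_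
  have hNn : (N : ℝ) ≤ n := by exact_mod_cast not_lt.1 (Finset.mem_range.not.1 hn)
  rw [truncPow_of_neg (by nlinarith), mul_zero]

theorem dexp_eq_truncPow_zero_add_sum (hτ : 0 ≤ τ) {t : ℝ} {N : ℕ} (ht : t < (N + 1) * τ) :
    dexp μ τ t = truncPow 0 t +
      ∑ m ∈ Finset.range N, (-μ) ^ (m + 1) * truncPow (m + 1) (t - (m + 1) * τ) := by
  rw [dexp_eq_sum hτ (N := N + 1) (by exact_mod_cast ht), Finset.sum_range_succ', add_comm]
  push_cast
  simp

theorem dexp_of_neg (hτ : 0 ≤ τ) {t : ℝ} (ht : t < 0) : dexp μ τ t = 0 := by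
  simpa using dexp_eq_sum (μ := μ) hτ (N := 0) (by simpa using ht)

theorem dexp_of_mem_Icc (hτ : 0 < τ) {t : ℝ} (ht : t ∈ Icc 0 τ) : dexp μ τ t = 1 := by
  rw [dexp_eq_truncPow_zero_add_sum hτ.le (N := 1) (by push_cast; linarith [ht.2]),
    truncPow_zero_of_nonneg ht.1]
  simp [truncPow_succ_of_nonpos (sub_nonpos.2 ht.2)]

theorem dexp_zero (hτ : 0 < τ) : dexp μ τ 0 = 1 :=
  dexp_of_mem_Icc hτ ⟨le_rfl, hτ.le⟩

theorem exists_dexp_eventuallyEq (hτ : 0 < τ) (t : ℝ) : ∃ N : ℕ, t - τ < N * τ ∧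
    dexp μ τ =ᶠ[𝓝 t] fun s => truncPow 0 s +
      ∑ m ∈ Finset.range N, (-μ) ^ (m + 1) * truncPow (m + 1) (s - (m + 1) * τ) := by
  obtain ⟨N, hN⟩ := exists_nat_gt ((t - τ) / τ)
  have hN : t - τ < N * τ := (div_lt_iff₀ hτ).1 hN
  refine ⟨N, hN, ?_⟩
  filter_upwards [Iio_mem_nhds (by linarith : t < (N + 1) * τ)] with s hs
  exact dexp_eq_truncPow_zero_add_sum hτ.le hs

theorem hasDerivWithinAt_dexp (hτ : 0 < τ) (t : ℝ) :
    HasDerivWithinAt (dexp μ τ) (-μ * dexp μ τ (t - τ)) (Ici t) t := by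
  obtain ⟨N, hN, hdexp⟩ := exists_dexp_eventuallyEq (μ := μ) hτ t
  have hterm : ∀ m : ℕ, HasDerivWithinAt (fun s => truncPow (m + 1) (s - (m + 1) * τ))
      (truncPow m (t - (m + 1) * τ)) (Ici t) t := fun m => by
    have hshift : HasDerivWithinAt (fun s : ℝ => s - (m + 1) * τ) 1 (Ici t) t :=
      ((hasDerivAt_id' t).sub_const _).hasDerivWithinAt
    have h := (hasDerivWithinAt_truncPow_succ m _).comp t hshift
      fun _ hs => Set.mem_Ici.2 (sub_le_sub_right hs _)
    rwa [mul_one] at h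
  have hsum := (hasDerivWithinAt_truncPow_zero t).add <|
    HasDerivWithinAt.fun_sum (u := Finset.range N) fun m _ => (hterm m).const_mul ((-μ) ^ (m + 1))
  refine (hsum.congr_of_eventuallyEq (nhdsWithin_le_nhds hdexp)
    hdexp.self_of_nhds).congr_deriv ?_
  rw [zero_add, dexp_eq_sum hτ.le hN, Finset.mul_sum]
  refine Finset.sum_congr rfl fun m _ => ?_
  rw [show t - τ - m * τ = t - (m + 1) * τ by ring]
  ring

theorem continuousOn_dexp (hτ : 0 < τ) : ContinuousOn (dexp μ τ) (Ici 0) := by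
  intro t ht
  obtain ⟨N, -, hdexp⟩ := exists_dexp_eventuallyEq (μ := μ) hτ t
  have hcont : Continuous fun s => 1 +
      ∑ m ∈ Finset.range N, (-μ) ^ (m + 1) * truncPow (m + 1) (s - (m + 1) * τ) := by
    have := continuous_truncPow_succ
    fun_prop
  refine hcont.continuousWithinAt.congr_of_eventuallyEq ?_ ?_
  · filter_upwards [nhdsWithin_le_nhds hdexp, self_mem_nhdsWithin] with s hs hs0
    simp only [hs, truncPow_zero_of_nonneg hs0]
  · simp only [hdexp.self_of_nhds, truncPow_zero_of_nonneg ht]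


theorem monotoneOn_dexp_sub_mul_exp (hμ : 0 ≤ μ) (hτ : 0 < τ) (hμτ : μ * τ ≤ (exp 1)⁻¹)
    {a t M : ℝ} (ha : 0 ≤ a) (hM₀ : 0 ≤ M)
    (hM : ∀ u ∈ Icc a t, exp ((u - τ) / τ) * dexp μ τ (u - τ) ≤ M) :
    MonotoneOn (fun u => dexp μ τ u - M * exp (-u / τ)) (Icc a t) := by
  have hμe : μ * exp 1 ≤ τ⁻¹ := by
    rw [← one_div, le_div_iff₀ hτ]
    calc μ * exp 1 * τ = μ * τ * exp 1 := by ring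
      _ ≤ (exp 1)⁻¹ * exp 1 := by gcongr
      _ = 1 := inv_mul_cancel₀ (exp_pos 1).ne'
  have hshift : ∀ u, dexp μ τ (u - τ) =
      exp 1 * exp (-u / τ) * (exp ((u - τ) / τ) * dexp μ τ (u - τ)) := fun u => by
    have : exp 1 * exp (-u / τ) * exp ((u - τ) / τ) = 1 := by
      rw [← exp_add, ← exp_add, exp_eq_one_iff]
      field_simp
      ring
    linear_combination (-dexp μ τ (u - τ)) * this
  refine monotoneOn_Icc_of_hasDerivWithinAt_Ici_nonneg
    (f' := fun u => M * exp (-u / τ) / τ - μ * dexp μ τ (u - τ)) ?_ (fun u _ => ?_) ?_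
  · exact ((continuousOn_dexp hτ).mono fun u hu => ha.trans hu.1).sub (by fun_prop)
  · refine ((hasDerivWithinAt_dexp hτ u).sub
      (((hasDerivAt_neg u).div_const τ).exp.const_mul M).hasDerivWithinAt).congr_deriv ?_
    ring
  · intro u hu
    have hexp : 0 ≤ M * exp (-u / τ) := mul_nonneg hM₀ (exp_pos _).le
    rw [hshift, sub_nonneg, div_eq_mul_inv]
    calc μ * (exp 1 * exp (-u / τ) * (exp ((u - τ) / τ) * dexp μ τ (u - τ)))
        ≤ μ * (exp 1 * exp (-u / τ) * M) := by gcongr; exact hM u (Ico_subset_Icc_self hu)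
      _ = μ * exp 1 * (M * exp (-u / τ)) := by ring
      _ ≤ τ⁻¹ * (M * exp (-u / τ)) := by gcongr
      _ = M * exp (-u / τ) * τ⁻¹ := mul_comm _ _

theorem monotoneOn_exp_mul_dexp_Iic_add (hμ : 0 ≤ μ) (hτ : 0 < τ) (hμτ : μ * τ ≤ (exp 1)⁻¹)
    {a : ℝ} (ha : 0 ≤ a) (h : MonotoneOn (fun t => exp (t / τ) * dexp μ τ t) (Iic a)) :
    MonotoneOn (fun t => exp (t / τ) * dexp μ τ t) (Iic (a + τ)) := by
  set z : ℝ → ℝ := fun t => exp (t / τ) * dexp μ τ t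
  rw [← Iic_union_Icc_eq_Iic (by linarith : a ≤ a + τ)]
  refine h.union_right ?_ isGreatest_Iic (isLeast_Icc (by linarith))
  intro s hs t ht hst
  set M := z (t - τ)
  have hta : t - τ ≤ a := by linarith [ht.2]
  have hM₀ : 0 ≤ M := by
    have := h (mem_Iic.2 (by linarith : -τ ≤ a)) (mem_Iic.2 hta) (by linarith [hs.1, hst])
    simpa [z, dexp_of_neg hτ.le (neg_neg_of_pos hτ)] using this
  set g : ℝ → ℝ := fun u => dexp μ τ u - M * exp (-u / τ)
  have hg := monotoneOn_dexp_sub_mul_exp hμ hτ hμτ (t := t) ha hM₀ fun u hu =>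
    h (mem_Iic.2 (by linarith [hu.2])) (mem_Iic.2 hta) (by linarith [hu.2])
  have hzg : ∀ u, z u - M = exp (u / τ) * g u := fun u => by
    have : exp (u / τ) * exp (-u / τ) = 1 := by rw [← exp_add, neg_div, add_neg_cancel, exp_zero]
    simp only [z, g]
    linear_combination M * this
  have hga : 0 ≤ g a := by
    rw [← mul_nonneg_iff_of_pos_left (exp_pos (a / τ)), ← hzg, sub_nonneg]
    exact h (mem_Iic.2 hta) (mem_Iic.2 le_rfl) hta
  have hgs : 0 ≤ g s := hga.trans (hg (left_mem_Icc.2 (hs.1.trans hst)) ⟨hs.1, hst⟩ hs.1)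
  have hgst : g s ≤ g t := hg ⟨hs.1, hst⟩ (right_mem_Icc.2 (hs.1.trans hst)) hst
  have key : z s - M ≤ z t - M := by
    rw [hzg, hzg]
    calc exp (s / τ) * g s ≤ exp (t / τ) * g s := by gcongr
      _ ≤ exp (t / τ) * g t := by gcongr
  linarith

theorem monotone_exp_mul_dexp (hμ : 0 ≤ μ) (hτ : 0 < τ) (hμτ : μ * τ ≤ (exp 1)⁻¹) :
    Monotone fun t => exp (t / τ) * dexp μ τ t := by
  have hbase : MonotoneOn (fun t => exp (t / τ) * dexp μ τ t) (Iic 0) := by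
    intro x _ y hy hxy
    rcases (mem_Iic.1 hy).lt_or_eq with hy | rfl
    · simp [dexp_of_neg hτ.le hy, dexp_of_neg hτ.le (hxy.trans_lt hy)]
    rcases hxy.lt_or_eq with hx | rfl
    · simp [dexp_of_neg hτ.le hx, dexp_zero hτ]
    · rfl
  have hstep : ∀ n : ℕ, MonotoneOn (fun t => exp (t / τ) * dexp μ τ t) (Iic (n * τ)) := by
    intro n
    induction n with
    | zero => simpa using hbase
    | succ n ih =>
      rw [Nat.cast_succ, add_one_mul]
      exact monotoneOn_exp_mul_dexp_Iic_add hμ hτ hμτ (by positivity) ih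
  intro x y hxy
  obtain ⟨n, hn⟩ := exists_nat_ge (y / τ)
  have hy : y ≤ n * τ := (div_le_iff₀ hτ).1 hn
  exact hstep n (hxy.trans hy) hy hxy

theorem dexp_pos (hμ : 0 ≤ μ) (hτ : 0 < τ) (hμτ : μ * τ ≤ (exp 1)⁻¹) {t : ℝ} (ht : 0 ≤ t) :
    0 < dexp μ τ t := by
  have h := monotone_exp_mul_dexp hμ hτ hμτ ht
  simp only [zero_div, exp_zero, one_mul, dexp_zero hτ] at h
  exact (mul_pos_iff_of_pos_left (exp_pos _)).1 (one_pos.trans_le h)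

theorem dexp_nonneg (hμ : 0 ≤ μ) (hτ : 0 < τ) (hμτ : μ * τ ≤ (exp 1)⁻¹) (t : ℝ) :
    0 ≤ dexp μ τ t := by
  rcases lt_or_ge t 0 with ht | ht
  · exact (dexp_of_neg hτ.le ht).ge
  · exact (dexp_pos hμ hτ hμτ ht).le

theorem antitoneOn_dexp (hμ : 0 ≤ μ) (hτ : 0 < τ) (hμτ : μ * τ ≤ (exp 1)⁻¹) :
    AntitoneOn (dexp μ τ) (Ici 0) := fun a ha b _ hab =>
  antitoneOn_Icc_of_hasDerivWithinAt_Ici_nonpos ((continuousOn_dexp hτ).mono Icc_subset_Ici_self)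
    (fun x _ => hasDerivWithinAt_dexp hτ x)
    (fun x _ => by nlinarith [dexp_nonneg hμ hτ hμτ (x - τ)])
    ⟨ha, hab⟩ ⟨ha.trans hab, le_rfl⟩ hab

theorem dexp_mul_one_add_le_one (hμ : 0 ≤ μ) (hτ : 0 < τ) (hμτ : μ * τ ≤ (exp 1)⁻¹) {T : ℝ}
    (hT : τ ≤ T) : dexp μ τ T * (1 + μ * (T - τ)) ≤ 1 := by
  have h := antitoneOn_Icc_of_hasDerivWithinAt_Ici_nonpos
    (f := fun x => dexp μ τ x + μ * dexp μ τ T * (x - τ))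
    (((continuousOn_dexp hτ).mono fun x hx => hτ.le.trans hx.1).add (by fun_prop))
    (fun x _ => (hasDerivWithinAt_dexp hτ x).add
      (((hasDerivAt_id x).sub_const τ).const_mul (μ * dexp μ τ T)).hasDerivWithinAt)
    (fun x hx => by
      have := antitoneOn_dexp hμ hτ hμτ (mem_Ici.2 (by linarith [hx.1]))
        (mem_Ici.2 (hτ.le.trans hT)) (by linarith [hx.2] : x - τ ≤ T)
      nlinarith)
    (left_mem_Icc.2 hT) (right_mem_Icc.2 hT) hT
  simp only [sub_self, mul_zero, add_zero, dexp_of_mem_Icc hτ ⟨hτ.le, le_rfl⟩] at h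
  linarith

theorem tendsto_dexp_atTop (hμ : 0 < μ) (hτ : 0 < τ) (hμτ : μ * τ ≤ (exp 1)⁻¹) :
    Tendsto (dexp μ τ) atTop (𝓝 0) := by
  have hlin : Tendsto (fun T => 1 + μ * (T - τ)) atTop atTop :=
    tendsto_atTop_add_const_left _ 1
      ((tendsto_atTop_add_const_right _ (-τ) tendsto_id).const_mul_atTop hμ)
  refine squeeze_zero' (Eventually.of_forall (dexp_nonneg hμ.le hτ hμτ)) ?_
    (tendsto_inv_atTop_zero.comp hlin)
  filter_upwards [eventually_ge_atTop τ] with T hT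
  rw [Function.comp_apply, ← one_div, le_div_iff₀ (by nlinarith)]
  exact dexp_mul_one_add_le_one hμ.le hτ hμτ hT

theorem integral_Ioi_mul_dexp_sub (hμ : 0 < μ) (hτ : 0 < τ) (hμτ : μ * τ ≤ (exp 1)⁻¹) :
    ∫ t in Ioi 0, μ * dexp μ τ (t - τ) = 1 := by
  have h := integral_Ioi_of_hasDerivWithinAt_Ioi_of_nonneg (g := fun t => -dexp μ τ t)
    (continuousOn_dexp hτ).neg
    (fun x _ => ((hasDerivWithinAt_dexp hτ x).neg.mono Ioi_subset_Ici_self).congr_deriv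
      (by ring))
    (fun x _ => mul_nonneg hμ.le (dexp_nonneg hμ.le hτ hμτ _))
    (by simpa using (tendsto_dexp_atTop hμ hτ hμτ).neg)
  rw [h, dexp_zero hτ]
  ring

theorem antitone_Ψdexp (hμ : 0 ≤ μ) (hτ : 0 < τ) (hμτ : μ * τ ≤ (exp 1)⁻¹) :
    Antitone (Ψdexp μ τ) := by
  intro a b hab
  by_cases hb : b < 0
  · simp [Ψdexp, hb, hab.trans_lt hb]
  rw [not_lt] at hb
  have hdb : dexp μ τ b ≤ 1 := by
    simpa [dexp_zero hτ] using antitoneOn_dexp hμ hτ hμτ self_mem_Ici hb hb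
  by_cases ha : a < 0
  · simpa [Ψdexp, ha, hb.not_gt] using hdb
  · rw [not_lt] at ha
    simpa [Ψdexp, ha.not_gt, hb.not_gt] using antitoneOn_dexp hμ hτ hμτ ha hb hab

theorem continuousWithinAt_Ψdexp_Ici (hτ : 0 < τ) (t : ℝ) :
    ContinuousWithinAt (Ψdexp μ τ) (Ici t) t := by
  rcases lt_or_ge t 0 with ht | ht
  · refine (continuousWithinAt_const (b := (1 : ℝ))).congr_of_eventuallyEq ?_ (if_pos ht)
    filter_upwards [nhdsWithin_le_nhds (Iio_mem_nhds ht)] with s hs using if_pos hs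
  · exact (hasDerivWithinAt_dexp hτ t).continuousWithinAt.congr
      (fun s hs => if_neg (ht.trans hs).not_gt) (if_neg ht.not_gt)

theorem Ψdexp_zero (hτ : 0 < τ) : Ψdexp μ τ 0 = 1 :=
  (if_neg (lt_irrefl 0)).trans (dexp_zero hτ)

theorem tendsto_Ψdexp_atTop (hμ : 0 < μ) (hτ : 0 < τ) (hμτ : μ * τ ≤ (exp 1)⁻¹) :
    Tendsto (Ψdexp μ τ) atTop (𝓝 0) :=
  (tendsto_dexp_atTop hμ hτ hμτ).congr' <|
    (eventually_ge_atTop 0).mono fun _ ht => (if_neg ht.not_gt).symm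

end Dexp

/-- If `0 < μτ < 1/e`, then `Ψ` is a valid survival function: non-increasing, right
continuous, `Ψ(0) = 1`, `Ψ(t) → 0` as `t → ∞`; consequently
`ψ(t) = μ dexp(-μ(t-τ); -μτ)` is a probability density on `[0, ∞)`. -/
theorem dexp_is_survival_function (μ τ : ℝ) (hμ : 0 < μ) (hτ : 0 < τ)
    (hμτ : μ * τ < (Real.exp 1)⁻¹) :
    Antitone (fun t => Ψdexp μ τ t) ∧
    (∀ t : ℝ, Tendsto (fun s => Ψdexp μ τ s) (nhdsWithin t (Ici t)) (nhds (Ψdexp μ τ t))) ∧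
    Ψdexp μ τ 0 = 1 ∧
    Tendsto (fun t => Ψdexp μ τ t) atTop (nhds 0) ∧
    (∀ t : ℝ, 0 ≤ t → 0 ≤ μ * dexp μ τ (t - τ)) ∧
    ∫ t in Ioi (0 : ℝ), μ * dexp μ τ (t - τ) = 1 :=
  ⟨antitone_Ψdexp hμ.le hτ hμτ.le, continuousWithinAt_Ψdexp_Ici hτ,
    Ψdexp_zero hτ,
    tendsto_Ψdexp_atTop hμ hτ hμτ.le,
    fun _ _ => mul_nonneg hμ.le (dexp_nonneg hμ.le hτ hμτ.le _),
    integral_Ioi_mul_dexp_sub hμ hτ hμτ.le⟩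
end
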